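/- For a positive integer n, let K_n denote the set of odd functions R ∈ Q_{2n−1} with R'(x) > 0 for all x ∈ [−1,1], and let S_n = sup_{R ∈ K_n} R'(0)/‖R‖. Then for every n ≥ 1, S_{n+1} ≥ 9 S_n; equivalently, for every R ∈ K_n and every c < 9·R'(0)/‖R‖ there exists G ∈ K_{n+1} with G'(0) > c·‖G‖. -/

import Mathlib

/-- `QMem m R` means `R` agrees on `[-1,1]` with a rational function `p/q`, where
`p, q` are real polynomials of degree at most `m` and `q` has no zeros on `[-1,1]`. -/
def QMem (m : ℕ) (R : ℝ → ℝ) : Prop :=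
  ∃ p q : Polynomial ℝ, p.natDegree ≤ m ∧ q.natDegree ≤ m ∧
    (∀ x ∈ Set.Icc (-1:ℝ) 1, Polynomial.eval x q ≠ 0) ∧
    (∀ x ∈ Set.Icc (-1:ℝ) 1, R x = Polynomial.eval x p / Polynomial.eval x q)

/-- The uniform (supremum) norm on `C[-1,1]`. -/
noncomputable def supNorm (R : ℝ → ℝ) : ℝ := sSup ((fun x => |R x|) '' Set.Icc (-1:ℝ) 1)

/-- `KMem n R` means `R` is an odd member of `Q_{2n-1}` with `R' > 0` on `[-1,1]`,
i.e. `R ∈ K_n` in the notation of the paper. -/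
def KMem (n : ℕ) (R : ℝ → ℝ) : Prop :=
  QMem (2 * n - 1) R ∧
  (∀ x ∈ Set.Icc (-1:ℝ) 1, R (-x) = - R x) ∧
  (∀ x ∈ Set.Icc (-1:ℝ) 1, 0 < derivWithin R (Set.Icc (-1:ℝ) 1) x)

/-!
Multiply `R` by the even degree-two rational function `boost a ε x = (a ε² + x²) / (ε² + a x²)`
with `1 < a < 3` and small `ε > 0`. Then `G = R · boost a ε` is odd, lies in `Q_{2n+1}` and has
`G'(0) = a R'(0)`, while `boost a ε ≤ a` everywhere and `boost a ε x ≤ a⁻¹ + ε² / x²`; since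
`|R(x)| = O(|x|)`, `‖G‖` is at most about `‖R‖ / a`, so `G'(0) / ‖G‖` gains a factor close
to `a²`.

The sign of `G'` is that of `R' (a ε² + x²)(ε² + a x²) - 2 (a² - 1) ε² x R`. Near `0`, where
`R(x) ≈ R'(0) x`, the identity `(a ε² + x²)(ε² + a x²) = (1 + a)² ε² x² + a (ε² - x²)²`
makes this positive as soon as `2 (a² - 1) < (1 + a)²`, that is `a < 3`; away from `0` the
term `a x⁴` wins once `ε` is small. Letting `a → 3` gives the factor `9`.
-/

open Filter Topology Set

local notation "I" => Icc (-1 : ℝ) 1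

section QMem

open Polynomial

lemma QMem.mono {m k : ℕ} {R : ℝ → ℝ} (h : QMem m R) (hmk : m ≤ k) : QMem k R := by
  obtain ⟨p, q, hp, hq, hq0, hR⟩ := h
  exact ⟨p, q, hp.trans hmk, hq.trans hmk, hq0, hR⟩

lemma QMem.mul {m k : ℕ} {R S : ℝ → ℝ} (hR : QMem m R) (hS : QMem k S) :
    QMem (m + k) (fun x => R x * S x) := by
  obtain ⟨p, q, hp, hq, hq0, hpq⟩ := hR
  obtain ⟨p', q', hp', hq', hq0', hpq'⟩ := hS
  refine ⟨p * p', q * q', natDegree_mul_le.trans (add_le_add hp hp'),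
    natDegree_mul_le.trans (add_le_add hq hq'), fun x hx => ?_, fun x hx => ?_⟩
  · simpa only [eval_mul] using mul_ne_zero (hq0 x hx) (hq0' x hx)
  · rw [eval_mul, eval_mul, ← div_mul_div_comm, ← hpq x hx, ← hpq' x hx]

lemma QMem.contDiffOn {m : ℕ} {R : ℝ → ℝ} (h : QMem m R) {n : WithTop ℕ∞} :
    ContDiffOn ℝ n R I := by
  obtain ⟨p, q, -, -, hq0, hR⟩ := h
  have hpoly (r : ℝ[X]) : ContDiff ℝ n fun x => r.eval x := by
    simpa using r.contDiff_aeval (R := ℝ) (𝕜 := ℝ) n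
  exact ((hpoly p).contDiffOn.div (hpoly q).contDiffOn hq0).congr hR

end QMem

lemma abs_le_supNorm {f : ℝ → ℝ} (hf : ContinuousOn f I) {x : ℝ} (hx : x ∈ I) :
    |f x| ≤ supNorm f :=
  le_csSup (isCompact_Icc.bddAbove_image hf.abs) ⟨x, hx, rfl⟩

lemma supNorm_nonneg (f : ℝ → ℝ) : 0 ≤ supNorm f :=
  Real.sSup_nonneg <| by rintro _ ⟨x, -, rfl⟩; exact abs_nonneg _

lemma supNorm_le {f : ℝ → ℝ} {M : ℝ} (h : ∀ x ∈ I, |f x| ≤ M) : supNorm f ≤ M :=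
  csSup_le ((nonempty_Icc.2 (by norm_num)).image _) (by rintro _ ⟨x, hx, rfl⟩; exact h x hx)

lemma abs_le_mul_abs_of_abs_derivWithin_le {R : ℝ → ℝ} {s : Set ℝ} {C x : ℝ}
    (hs : Convex ℝ s) (hR : DifferentiableOn ℝ R s) (h0 : 0 ∈ s) (hR0 : R 0 = 0)
    (hx : x ∈ s)
    (hC : ∀ y ∈ s, |y| ≤ |x| → |derivWithin R s y| ≤ C) : |R x| ≤ C * |x| := by
  have hsub : uIcc 0 x ⊆ s := segment_eq_uIcc (𝕜 := ℝ) 0 x ▸ hs.segment_subset h0 hx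
  have hbound : ∀ y ∈ uIcc 0 x, ‖derivWithin R s y‖ ≤ C := fun y hy =>
    hC y (hsub hy) (by simpa using abs_sub_left_of_mem_uIcc hy)
  simpa [hR0] using Convex.norm_image_sub_le_of_norm_hasDerivWithin_le
    (fun y hy => ((hR y (hsub hy)).hasDerivWithinAt).mono hsub) hbound (convex_uIcc 0 x)
    left_mem_uIcc right_mem_uIcc

lemma exists_abs_le_mul_abs_of_contDiffOn {R : ℝ → ℝ} (hR : ContDiffOn ℝ 1 R I)
    (hR0 : R 0 = 0) : ∃ L, 0 ≤ L ∧ ∀ x ∈ I, |R x| ≤ L * |x| := by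
  obtain ⟨L, hL⟩ := isCompact_Icc.exists_bound_of_continuousOn
    (hR.continuousOn_derivWithin (uniqueDiffOn_Icc (by norm_num)) le_rfl)
  refine ⟨L, (norm_nonneg _).trans (hL 0 (by norm_num)), fun x hx => ?_⟩
  exact abs_le_mul_abs_of_abs_derivWithin_le (convex_Icc _ _) (hR.differentiableOn one_ne_zero)
    (by norm_num) hR0 hx fun y hy _ => hL y hy

lemma mul_le_mul_sq_of_abs_le {x r K : ℝ} (hr : |r| ≤ K * |x|) : x * r ≤ K * x ^ 2 :=
  calc x * r ≤ |x| * |r| := (le_abs_self _).trans (abs_mul x r).le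
    _ ≤ |x| * (K * |x|) := mul_le_mul_of_nonneg_left hr (abs_nonneg x)
    _ = K * x ^ 2 := by rw [← sq_abs x]; ring

noncomputable def boost (a ε x : ℝ) : ℝ := (a * ε ^ 2 + x ^ 2) / (ε ^ 2 + a * x ^ 2)

noncomputable def boostDeriv (a ε x : ℝ) : ℝ :=
  -(2 * (a ^ 2 - 1) * ε ^ 2 * x) / (ε ^ 2 + a * x ^ 2) ^ 2

section boost

variable {a ε : ℝ}

lemma boost_denom_pos (ha : 0 ≤ a) (hε : ε ≠ 0) (x : ℝ) : 0 < ε ^ 2 + a * x ^ 2 := by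
  positivity

lemma boost_zero (hε : ε ≠ 0) : boost a ε 0 = a := by
  simp [boost, hε]

lemma boost_neg (x : ℝ) : boost a ε (-x) = boost a ε x := by
  simp [boost]

lemma boost_nonneg (ha : 0 ≤ a) (hε : ε ≠ 0) (x : ℝ) : 0 ≤ boost a ε x :=
  div_nonneg (by positivity) (boost_denom_pos ha hε x).le

lemma boost_le (ha : 1 ≤ a) (hε : ε ≠ 0) (x : ℝ) : boost a ε x ≤ a := by
  rw [boost, div_le_iff₀ (boost_denom_pos (by linarith) hε x)]
  nlinarith [mul_nonneg (by nlinarith : (0:ℝ) ≤ a ^ 2 - 1) (sq_nonneg x)]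

lemma boost_le_inv_add (ha : 0 < a) {x : ℝ} (hx : x ≠ 0) :
    boost a ε x ≤ a⁻¹ + ε ^ 2 / x ^ 2 := by
  have hx2 : 0 < x ^ 2 := by positivity
  calc boost a ε x ≤ (a * ε ^ 2 + x ^ 2) / (a * x ^ 2) :=
        div_le_div_of_nonneg_left (by positivity) (by positivity) (by nlinarith [sq_nonneg ε])
    _ = a⁻¹ + ε ^ 2 / x ^ 2 := by field_simp; ring

lemma hasDerivAt_boost (ha : 0 ≤ a) (hε : ε ≠ 0) (x : ℝ) :
    HasDerivAt (boost a ε) (boostDeriv a ε x) x := by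
  have hu : HasDerivAt (fun y => a * ε ^ 2 + y ^ 2) (2 * x) x := by
    simpa using (hasDerivAt_pow 2 x).const_add (a * ε ^ 2)
  have hv : HasDerivAt (fun y => ε ^ 2 + a * y ^ 2) (a * (2 * x)) x := by
    simpa using ((hasDerivAt_pow 2 x).const_mul a).const_add (ε ^ 2)
  exact (hu.div hv (boost_denom_pos ha hε x).ne').congr_deriv (by rw [boostDeriv]; ring)

open Polynomial in
lemma qMem_boost (ha : 0 ≤ a) (hε : ε ≠ 0) : QMem 2 (boost a ε) := by
  refine ⟨C (a * ε ^ 2) + X ^ 2, C (ε ^ 2) + C a * X ^ 2, by compute_degree, by compute_degree,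
    fun x _ => ?_, fun x _ => ?_⟩
  · simpa using (boost_denom_pos ha hε x).ne'
  · simp [boost]

lemma derivWithin_mul_boost {R : ℝ → ℝ} (ha : 0 ≤ a) (hε : ε ≠ 0)
    (hR : DifferentiableOn ℝ R I) {x : ℝ} (hx : x ∈ I) :
    derivWithin (fun y => R y * boost a ε y) I x =
      derivWithin R I x * boost a ε x + R x * boostDeriv a ε x :=
  ((hR x hx).hasDerivWithinAt.mul (hasDerivAt_boost ha hε x).hasDerivWithinAt).derivWithin
    (uniqueDiffOn_Icc (by norm_num) x hx)

lemma mul_boost_add_mul_boostDeriv_pos_iff (ha : 0 ≤ a) (hε : ε ≠ 0) (x r r' : ℝ) :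
    0 < r' * boost a ε x + r * boostDeriv a ε x ↔
      2 * (a ^ 2 - 1) * ε ^ 2 * (x * r) < r' * ((a * ε ^ 2 + x ^ 2) * (ε ^ 2 + a * x ^ 2)) := by
  have hv := boost_denom_pos ha hε x
  have : r' * boost a ε x + r * boostDeriv a ε x =
      (r' * ((a * ε ^ 2 + x ^ 2) * (ε ^ 2 + a * x ^ 2)) - 2 * (a ^ 2 - 1) * ε ^ 2 * (x * r)) /
        (ε ^ 2 + a * x ^ 2) ^ 2 := by
    rw [boost, boostDeriv]; field_simp; ring
  rw [this, div_pos_iff_of_pos_right (by positivity), sub_pos]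

lemma mul_boost_add_mul_boostDeriv_pos_of_near {x r r' K k : ℝ} (ha : 1 ≤ a) (hε : ε ≠ 0)
    (hk : 0 < k) (hK : 2 * (a ^ 2 - 1) * K < (1 + a) ^ 2 * k)
    (hr : |r| ≤ K * |x|) (hr' : k ≤ r') : 0 < r' * boost a ε x + r * boostDeriv a ε x := by
  rw [mul_boost_add_mul_boostDeriv_pos_iff (by linarith) hε]
  rcases eq_or_ne x 0 with rfl | hx
  · simpa using mul_pos (hk.trans_le hr') (by positivity : 0 < a * ε ^ 2 * ε ^ 2)
  have ha2 : 0 ≤ 2 * (a ^ 2 - 1) * ε ^ 2 := by have : 1 ≤ a ^ 2 := one_le_pow₀ ha; positivity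
  calc 2 * (a ^ 2 - 1) * ε ^ 2 * (x * r)
      ≤ 2 * (a ^ 2 - 1) * ε ^ 2 * (K * x ^ 2) :=
        mul_le_mul_of_nonneg_left (mul_le_mul_sq_of_abs_le hr) ha2
    _ = 2 * (a ^ 2 - 1) * K * (ε ^ 2 * x ^ 2) := by ring
    _ < (1 + a) ^ 2 * k * (ε ^ 2 * x ^ 2) := by gcongr
    _ ≤ k * ((a * ε ^ 2 + x ^ 2) * (ε ^ 2 + a * x ^ 2)) := by
      nlinarith [mul_nonneg (mul_nonneg hk.le (by linarith : 0 ≤ a)) (sq_nonneg (ε ^ 2 - x ^ 2))]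
    _ ≤ r' * ((a * ε ^ 2 + x ^ 2) * (ε ^ 2 + a * x ^ 2)) := by gcongr

lemma mul_boost_add_mul_boostDeriv_pos_of_far {x r r' L m δ : ℝ} (ha : 1 ≤ a) (hε : ε ≠ 0)
    (hm : 0 < m) (hδ : 0 < δ) (hx : δ ≤ |x|)
    (hLε : 2 * (a ^ 2 - 1) * L * ε ^ 2 < a * m * δ ^ 2)
    (hr : |r| ≤ L * |x|) (hr' : m ≤ r') : 0 < r' * boost a ε x + r * boostDeriv a ε x := by
  rw [mul_boost_add_mul_boostDeriv_pos_iff (by linarith) hε]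
  have ha2 : 0 ≤ 2 * (a ^ 2 - 1) * ε ^ 2 := by have : 1 ≤ a ^ 2 := one_le_pow₀ ha; positivity
  have hδx : δ ^ 2 ≤ x ^ 2 := by simpa using pow_le_pow_left₀ hδ.le hx 2
  have hx2 : 0 < x ^ 2 := (pow_pos hδ 2).trans_le hδx
  calc 2 * (a ^ 2 - 1) * ε ^ 2 * (x * r)
      ≤ 2 * (a ^ 2 - 1) * ε ^ 2 * (L * x ^ 2) :=
        mul_le_mul_of_nonneg_left (mul_le_mul_sq_of_abs_le hr) ha2
    _ = 2 * (a ^ 2 - 1) * L * ε ^ 2 * x ^ 2 := by ring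
    _ < a * m * δ ^ 2 * x ^ 2 := by gcongr
    _ ≤ m * ((a * ε ^ 2 + x ^ 2) * (ε ^ 2 + a * x ^ 2)) := by
      nlinarith [mul_le_mul_of_nonneg_left hδx (by positivity : 0 ≤ a * m * x ^ 2),
        mul_nonneg (mul_nonneg hm.le (by linarith : 0 ≤ a)) (sq_nonneg (ε ^ 2)),
        mul_nonneg hm.le (mul_nonneg (sq_nonneg ε) hx2.le)]
    _ ≤ r' * ((a * ε ^ 2 + x ^ 2) * (ε ^ 2 + a * x ^ 2)) := by gcongr

end boost

section eventually

variable {R : ℝ → ℝ} {a : ℝ}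

lemma eventually_forall_mul_boost_add_mul_boostDeriv_pos (hR : ContDiffOn ℝ 1 R I)
    (hR0 : R 0 = 0) (hpos : ∀ x ∈ I, 0 < derivWithin R I x) (ha1 : 1 < a) (ha3 : a < 3) :
    ∀ᶠ ε in 𝓝[>] 0, ∀ x ∈ I,
      0 < derivWithin R I x * boost a ε x + R x * boostDeriv a ε x := by
  have h0 : (0 : ℝ) ∈ I := by norm_num
  have hcont : ContinuousOn (derivWithin R I) I :=
    hR.continuousOn_derivWithin (uniqueDiffOn_Icc (by norm_num)) le_rfl
  set s := derivWithin R I 0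
  have hs : 0 < s := hpos 0 h0
  obtain ⟨τ, hτK, hτ, hτs⟩ :
      ∃ τ, 2 * (a ^ 2 - 1) * (s + τ) < (1 + a) ^ 2 * (s - τ) ∧ 0 < τ ∧ τ < s := by
    have h3 : 2 * (a ^ 2 - 1) * (s + 0) < (1 + a) ^ 2 * (s - 0) := by
      nlinarith [mul_pos (mul_pos hs (by linarith : 0 < 1 + a)) (by linarith : 0 < 3 - a)]
    exact (((ContinuousAt.eventually_lt (by fun_prop) (by fun_prop) h3).filter_mono
      nhdsWithin_le_nhds).and (Ioo_mem_nhdsGT hs)).exists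
  obtain ⟨δ, hδ, hδτ⟩ := Metric.continuousWithinAt_iff.1 (hcont 0 h0) τ hτ
  have hnear : ∀ y ∈ I, |y| < δ → |derivWithin R I y - s| < τ := fun y hy hyδ => by
    simpa [Real.dist_eq] using hδτ hy (by simpa [Real.dist_eq] using hyδ)
  obtain ⟨L, -, hRL⟩ := exists_abs_le_mul_abs_of_contDiffOn hR hR0
  obtain ⟨z, hz, hzmin⟩ := isCompact_Icc.exists_isMinOn (nonempty_Icc.2 (by norm_num)) hcont
  have hLε : ∀ᶠ ε in 𝓝 0, 2 * (a ^ 2 - 1) * L * ε ^ 2 < a * derivWithin R I z * δ ^ 2 :=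
    ContinuousAt.eventually_lt (by fun_prop) continuousAt_const
      (by simpa using mul_pos (mul_pos (by linarith) (hpos z hz)) (pow_pos hδ 2))
  filter_upwards [hLε.filter_mono nhdsWithin_le_nhds, self_mem_nhdsWithin] with ε hLε hε x hx
  rcases lt_or_ge |x| δ with hxδ | hxδ
  · refine mul_boost_add_mul_boostDeriv_pos_of_near ha1.le (ne_of_gt hε) (sub_pos.2 hτs) hτK
      (abs_le_mul_abs_of_abs_derivWithin_le (convex_Icc _ _) (hR.differentiableOn one_ne_zero)
        h0 hR0 hx fun y hy hyx => ?_) (by linarith [abs_lt.1 (hnear x hx hxδ)])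
    have := abs_lt.1 (hnear y hy (hyx.trans_lt hxδ))
    exact abs_le.2 ⟨by linarith, by linarith⟩
  · exact mul_boost_add_mul_boostDeriv_pos_of_far ha1.le (ne_of_gt hε) (hpos z hz) hδ hxδ hLε
      (hRL x hx) (hzmin hx)

lemma eventually_supNorm_mul_boost_lt (hR : ContDiffOn ℝ 1 R I) (hR0 : R 0 = 0) (ha : 1 < a)
    {M : ℝ} (hM : supNorm R / a < M) :
    ∀ᶠ ε in 𝓝[>] 0, supNorm (fun x => R x * boost a ε x) < M := by
  set N := supNorm R
  obtain ⟨L, hL, hRL⟩ := exists_abs_le_mul_abs_of_contDiffOn hR hR0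
  have hM0 : 0 < M := (div_nonneg (supNorm_nonneg R) (by linarith)).trans_lt hM
  obtain ⟨ρ, hρM, hρ⟩ : ∃ ρ, a * (L * ρ) < M ∧ 0 < ρ :=
    (((ContinuousAt.eventually_lt (x₀ := 0) (by fun_prop) continuousAt_const
      (by simpa using hM0)).filter_mono (nhdsWithin_le_nhds (s := Ioi 0))).and
        self_mem_nhdsWithin).exists
  have hNε : ∀ᶠ ε in 𝓝 0, N * (a⁻¹ + ε ^ 2 / ρ ^ 2) < M :=
    ContinuousAt.eventually_lt (by fun_prop) continuousAt_const
      (by simpa [div_eq_mul_inv] using hM)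
  filter_upwards [hNε.filter_mono nhdsWithin_le_nhds, self_mem_nhdsWithin] with ε hNε hε
  have hboost := boost_nonneg (by linarith : 0 ≤ a) (ne_of_gt hε)
  refine (supNorm_le fun x hx => ?_).trans_lt (max_lt hρM hNε)
  rw [abs_mul, abs_of_nonneg (hboost x)]
  rcases le_or_gt |x| ρ with hxρ | hxρ
  · calc |R x| * boost a ε x ≤ (L * ρ) * a :=
          mul_le_mul ((hRL x hx).trans (by gcongr)) (boost_le ha.le (ne_of_gt hε) x)
            (hboost x) (by positivity)
      _ ≤ _ := by rw [mul_comm]; exact le_max_left _ _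
  · have hx0 : x ≠ 0 := abs_pos.1 (hρ.trans hxρ)
    have hρx : ρ ^ 2 ≤ x ^ 2 := by simpa using pow_le_pow_left₀ hρ.le hxρ.le 2
    calc |R x| * boost a ε x ≤ N * (a⁻¹ + ε ^ 2 / x ^ 2) :=
          mul_le_mul (abs_le_supNorm hR.continuousOn hx) (boost_le_inv_add (by linarith) hx0)
            (hboost x) (supNorm_nonneg R)
      _ ≤ N * (a⁻¹ + ε ^ 2 / ρ ^ 2) := by gcongr; exact supNorm_nonneg R
      _ ≤ _ := le_max_right _ _

end eventually

lemma exists_mem_Ioo_one_three_div_lt_and_mul_lt {c N s : ℝ} (h : c * (N / 3) < 3 * s) :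
    ∃ a ∈ Ioo (1 : ℝ) 3, ∃ M, N / a < M ∧ c * M < a * s := by
  obtain ⟨a, hca, ha⟩ : ∃ a, c * (N / a) < a * s ∧ a ∈ Ioo 1 3 :=
    (((ContinuousAt.eventually_lt (by fun_prop (disch := norm_num)) (by fun_prop) h).filter_mono
      nhdsWithin_le_nhds).and (Ioo_mem_nhdsLT (by norm_num))).exists
  obtain ⟨M, hcM, hNM⟩ : ∃ M, c * M < a * s ∧ M ∈ Ioi (N / a) :=
    (((ContinuousAt.eventually_lt (by fun_prop) continuousAt_const hca).filter_mono
      (nhdsWithin_le_nhds (s := Ioi (N / a)))).and self_mem_nhdsWithin).exists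
  exact ⟨a, ha, M, hNM, hcM⟩

/-- `S_{n+1} ≥ 9 S_n`: for every `R ∈ K_n` and every `c < 9·R'(0)/‖R‖` there is a
`G ∈ K_{n+1}` with `G'(0) > c·‖G‖`. -/
theorem S_succ_ge_nine_mul (n : ℕ) (hn : 0 < n) (R : ℝ → ℝ) (hR : KMem n R)
    (c : ℝ) (hc : c < 9 * derivWithin R (Set.Icc (-1:ℝ) 1) 0 / supNorm R) :
    ∃ G : ℝ → ℝ, KMem (n + 1) G ∧
      c * supNorm G < derivWithin G (Set.Icc (-1:ℝ) 1) 0 := by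
  obtain ⟨hQ, hodd, hpos⟩ := hR
  have hC1 : ContDiffOn ℝ 1 R I := hQ.contDiffOn
  have h0 : (0 : ℝ) ∈ I := by norm_num
  have hR0 : R 0 = 0 := by linarith [neg_zero (G := ℝ) ▸ hodd 0 h0]
  set s := derivWithin R I 0
  have hs : 0 < s := hpos 0 h0
  have hc3 : c * (supNorm R / 3) < 3 * s := by
    rcases (supNorm_nonneg R).eq_or_lt with hN | hN
    · simp [← hN, hs]
    · rw [lt_div_iff₀ hN] at hc; linarith
  obtain ⟨a, ⟨ha1, ha3⟩, M, hNM, hcM⟩ := exists_mem_Ioo_one_three_div_lt_and_mul_lt hc3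
  obtain ⟨ε, ⟨hG', hGM⟩, hε⟩ :=
    (((eventually_forall_mul_boost_add_mul_boostDeriv_pos hC1 hR0 hpos ha1 ha3).and
      (eventually_supNorm_mul_boost_lt hC1 hR0 ha1 hNM)).and self_mem_nhdsWithin).exists
  have ha0 : 0 ≤ a := by linarith
  have hε0 : ε ≠ 0 := ne_of_gt hε
  have hderiv {x : ℝ} (hx : x ∈ I) :=
    derivWithin_mul_boost ha0 hε0 (hC1.differentiableOn one_ne_zero) hx
  refine ⟨fun x => R x * boost a ε x, ⟨(hQ.mul (qMem_boost ha0 hε0)).mono (by omega),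
    fun x hx => ?_, fun x hx => hderiv hx ▸ hG' x hx⟩, ?_⟩
  · simp only [hodd x hx, boost_neg, neg_mul]
  · rw [hderiv h0, boost_zero hε0, hR0, zero_mul, add_zero]
    have hG0 := supNorm_nonneg (fun x => R x * boost a ε x)
    have has : 0 < a * s := by positivity
    nlinarith [mul_pos (sub_pos.2 hGM) has, mul_nonneg hG0 (sub_pos.2 hcM).le]
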